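/- arXiv:2408.08382 — 2 statements merged into one kernel-verified Lean document; each statement's English description precedes it below -/
import Mathlib

section
/- Let 𝒢 be a hereditary family of finite digraphs and let Q : ℕ × ℕ → ℕ be a function such that for all integers s,t ≥ 1, every digraph in 𝒢 on at least Q(s,t) vertices has a clique of size at least s or an acyclic set of size at least t. Define f_Q(n) = min{ s·t : s,t ≥ 1 and Q(s+1,t+1) > n }. Then every digraph G ∈ 𝒢 on n vertices satisfies CC(G) ≤ (∑_{i=1}^{n} 1/f_Q(i)) · MAIS(G). -/
/-- A digraph: a finite vertex set (a finset of naturals) together with an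
irreflexive edge relation. -/
structure Digr where
  verts : Finset ℕ
  Adj : ℕ → ℕ → Prop
  loopless : ∀ v, ¬ Adj v v

namespace Digr

/-- A clique of a digraph: a set of vertices every two distinct members of which
are joined by directed edges in both directions. -/
def IsClique (G : Digr) (C : Finset ℕ) : Prop :=
  C ⊆ G.verts ∧ ∀ u ∈ C, ∀ v ∈ C, u ≠ v → G.Adj u v ∧ G.Adj v u

/-- An acyclic set of a digraph: a set of vertices inducing a sub-digraph with
no directed cycle. -/
def IsAcyclicSet (G : Digr) (I : Finset ℕ) : Prop :=
  I ⊆ G.verts ∧ ∀ v, ¬ Relation.TransGen (fun a b => a ∈ I ∧ b ∈ I ∧ G.Adj a b) v v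

/-- MAIS: the maximum size of an acyclic set. -/
noncomputable def mais (G : Digr) : ℕ :=
  sSup {k | ∃ I, G.IsAcyclicSet I ∧ I.card = k}

/-- ω: the maximum size of a clique. -/
noncomputable def cliqueNum (G : Digr) : ℕ :=
  sSup {k | ∃ C, G.IsClique C ∧ C.card = k}

/-- CC: the directed clique cover number, i.e. the minimum number of cliques
whose union is the vertex set. -/
noncomputable def cc (G : Digr) : ℕ :=
  sInf {k | ∃ 𝒞 : Finset (Finset ℕ), 𝒞.card = k ∧ (∀ C ∈ 𝒞, G.IsClique C) ∧
    ∀ v ∈ G.verts, ∃ C ∈ 𝒞, v ∈ C}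

/-- The sub-digraph induced by a set of vertices. -/
def induce (G : Digr) (S : Finset ℕ) : Digr where
  verts := S ∩ G.verts
  Adj := fun a b => a ∈ S ∧ b ∈ S ∧ G.Adj a b
  loopless := fun v h => G.loopless v h.2.2

/-- A family of digraphs is hereditary if it is closed under taking induced
sub-digraphs. -/
def Hereditary (𝒢 : Set Digr) : Prop :=
  ∀ G ∈ 𝒢, ∀ S ⊆ G.verts, G.induce S ∈ 𝒢

-- auxiliary lemmas
lemma bddAbove_cliqueSet (G : Digr) : BddAbove {k | ∃ C, G.IsClique C ∧ C.card = k} := by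
  refine ⟨G.verts.card, fun k hk => ?_⟩
  obtain ⟨C, hC, rfl⟩ := hk
  exact Finset.card_le_card hC.1

lemma bddAbove_acyclicSet (G : Digr) : BddAbove {k | ∃ I, G.IsAcyclicSet I ∧ I.card = k} := by
  refine ⟨G.verts.card, fun k hk => ?_⟩
  obtain ⟨I, hI, rfl⟩ := hk
  exact Finset.card_le_card hI.1

lemma card_le_cliqueNum (G : Digr) {C : Finset ℕ} (h : G.IsClique C) : C.card ≤ G.cliqueNum :=
  le_csSup (bddAbove_cliqueSet G) ⟨C, h, rfl⟩

lemma card_le_mais (G : Digr) {I : Finset ℕ} (h : G.IsAcyclicSet I) : I.card ≤ G.mais :=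
  le_csSup (bddAbove_acyclicSet G) ⟨I, h, rfl⟩

lemma isClique_singleton (G : Digr) {v : ℕ} (hv : v ∈ G.verts) : G.IsClique {v} := by
  constructor
  · simpa using hv
  · intro u hu w hw huw
    simp only [Finset.mem_singleton] at hu hw
    exact absurd (hu.trans hw.symm) huw

lemma isAcyclicSet_singleton (G : Digr) {v : ℕ} (hv : v ∈ G.verts) : G.IsAcyclicSet {v} := by
  constructor
  · simpa using hv
  · intro w hw
    have key : ∀ a b : ℕ,
        Relation.TransGen (fun a b => a ∈ ({v} : Finset ℕ) ∧ b ∈ ({v} : Finset ℕ) ∧ G.Adj a b) a b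
        → False := by
      intro a b h
      induction h with
      | single h =>
          obtain ⟨h1, h2, h3⟩ := h
          simp only [Finset.mem_singleton] at h1 h2
          subst h1
          subst h2
          exact G.loopless _ h3
      | tail _ h ih => exact ih
    exact key w w hw

lemma one_le_cliqueNum (G : Digr) (h : G.verts.Nonempty) : 1 ≤ G.cliqueNum := by
  obtain ⟨v, hv⟩ := h
  simpa using card_le_cliqueNum G (isClique_singleton G hv)

lemma one_le_mais (G : Digr) (h : G.verts.Nonempty) : 1 ≤ G.mais := by
  obtain ⟨v, hv⟩ := h
  simpa using card_le_mais G (isAcyclicSet_singleton G hv)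

lemma isClique_empty (G : Digr) : G.IsClique ∅ := by
  constructor
  · simp
  · intro u hu; simp at hu

lemma exists_max_clique (G : Digr) : ∃ C, G.IsClique C ∧ C.card = G.cliqueNum := by
  have hne : {k | ∃ C, G.IsClique C ∧ C.card = k}.Nonempty := ⟨0, ∅, isClique_empty G, by simp⟩
  exact Nat.sSup_mem hne (bddAbove_cliqueSet G)

lemma isClique_of_induce (G : Digr) {S C : Finset ℕ} (h : (G.induce S).IsClique C) :
    G.IsClique C := by
  constructor
  · exact h.1.trans (Finset.inter_subset_right)
  · intro u hu v hv huv
    obtain ⟨h1, h2⟩ := h.2 u hu v hv huv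
    exact ⟨h1.2.2, h2.2.2⟩

lemma isAcyclicSet_of_induce (G : Digr) {S I : Finset ℕ} (h : (G.induce S).IsAcyclicSet I) :
    G.IsAcyclicSet I := by
  constructor
  · exact h.1.trans (Finset.inter_subset_right)
  · intro v hv
    refine h.2 v (Relation.TransGen.mono ?_ v v hv)
    intro a b hab
    exact ⟨hab.1, hab.2.1, (Finset.mem_inter.mp (h.1 hab.1)).1,
      (Finset.mem_inter.mp (h.1 hab.2.1)).1, hab.2.2⟩

lemma mais_induce_le (G : Digr) (S : Finset ℕ) : (G.induce S).mais ≤ G.mais := by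
  have hne : {k | ∃ I, (G.induce S).IsAcyclicSet I ∧ I.card = k}.Nonempty := by
    refine ⟨0, ∅, ⟨by simp, fun v hv => ?_⟩, by simp⟩
    cases hv with
    | single h => simp at h
    | tail _ h => simp at h
  refine csSup_le hne ?_
  rintro k ⟨I, hI, rfl⟩
  exact card_le_mais G (isAcyclicSet_of_induce G hI)

lemma cc_mem (G : Digr) : ∃ 𝒞 : Finset (Finset ℕ), 𝒞.card = G.cc ∧ (∀ C ∈ 𝒞, G.IsClique C) ∧
    ∀ v ∈ G.verts, ∃ C ∈ 𝒞, v ∈ C := by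
  have hne : {k | ∃ 𝒞 : Finset (Finset ℕ), 𝒞.card = k ∧ (∀ C ∈ 𝒞, G.IsClique C) ∧
      ∀ v ∈ G.verts, ∃ C ∈ 𝒞, v ∈ C}.Nonempty := by
    refine ⟨(G.verts.image fun v => ({v} : Finset ℕ)).card,
      G.verts.image fun v => ({v} : Finset ℕ), rfl, ?_, ?_⟩
    · intro C hC
      obtain ⟨v, hv, rfl⟩ := Finset.mem_image.mp hC
      exact isClique_singleton G hv
    · intro v hv
      exact ⟨{v}, Finset.mem_image_of_mem _ hv, by simp⟩
  obtain ⟨𝒞, h1, h2, h3⟩ := Nat.sInf_mem hne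
  exact ⟨𝒞, h1, h2, h3⟩

lemma cc_le_card (G : Digr) {𝒞 : Finset (Finset ℕ)} (h1 : ∀ C ∈ 𝒞, G.IsClique C)
    (h2 : ∀ v ∈ G.verts, ∃ C ∈ 𝒞, v ∈ C) : G.cc ≤ 𝒞.card :=
  Nat.sInf_le ⟨𝒞, rfl, h1, h2⟩

lemma cc_le_succ (G : Digr) {C : Finset ℕ} (hC : G.IsClique C) :
    G.cc ≤ (G.induce (G.verts \ C)).cc + 1 := by
  obtain ⟨𝒞, hcard, hcl, hcov⟩ := cc_mem (G.induce (G.verts \ C))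
  have h1 : ∀ D ∈ insert C 𝒞, G.IsClique D := by
    intro D hD
    rcases Finset.mem_insert.mp hD with rfl | hD
    · exact hC
    · exact isClique_of_induce G (hcl D hD)
  have h2 : ∀ v ∈ G.verts, ∃ D ∈ insert C 𝒞, v ∈ D := by
    intro v hv
    by_cases hvC : v ∈ C
    · exact ⟨C, Finset.mem_insert_self _ _, hvC⟩
    · have : v ∈ (G.induce (G.verts \ C)).verts := by
        simp [induce, Finset.mem_sdiff, hv, hvC]
      obtain ⟨D, hD, hvD⟩ := hcov v this
      exact ⟨D, Finset.mem_insert_of_mem hD, hvD⟩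
  calc G.cc ≤ (insert C 𝒞).card := cc_le_card G h1 h2
    _ ≤ 𝒞.card + 1 := Finset.card_insert_le _ _
    _ = (G.induce (G.verts \ C)).cc + 1 := by rw [hcard]

lemma cc_eq_zero (G : Digr) (h : G.verts = ∅) : G.cc = 0 :=
  Nat.le_zero.mp (by simpa using cc_le_card G (𝒞 := ∅) (by simp) (by simp [h]))

end Digr

/-- The function `f_Q(n) = min { s·t : s,t ≥ 1 and Q(s+1,t+1) > n }`. -/
noncomputable def fQ (Q : ℕ → ℕ → ℕ) (n : ℕ) : ℕ :=
  sInf {k | ∃ s t : ℕ, 1 ≤ s ∧ 1 ≤ t ∧ n < Q (s + 1) (t + 1) ∧ k = s * t}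

lemma card_lt_Q {𝒢 : Set Digr} (Q : ℕ → ℕ → ℕ)
    (hQ : ∀ s t : ℕ, 1 ≤ s → 1 ≤ t → ∀ G ∈ 𝒢, Q s t ≤ G.verts.card →
      (∃ C : Finset ℕ, G.IsClique C ∧ s ≤ C.card) ∨
      (∃ I : Finset ℕ, G.IsAcyclicSet I ∧ t ≤ I.card))
    (G : Digr) (hG : G ∈ 𝒢) : G.verts.card < Q (G.cliqueNum + 1) (G.mais + 1) := by
  by_contra h
  push_neg at h
  rcases hQ (G.cliqueNum + 1) (G.mais + 1) (by omega) (by omega) G hG h with ⟨C, hC, hc⟩ | ⟨I, hI, hi⟩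
  · exact absurd (Digr.card_le_cliqueNum G hC) (by omega)
  · exact absurd (Digr.card_le_mais G hI) (by omega)

lemma fQ_le {Q : ℕ → ℕ → ℕ} {i n s t : ℕ} (hi : i ≤ n) (hs : 1 ≤ s) (ht : 1 ≤ t)
    (h : n < Q (s + 1) (t + 1)) : fQ Q i ≤ s * t :=
  Nat.sInf_le ⟨s, t, hs, ht, lt_of_le_of_lt hi h, rfl⟩

lemma one_le_fQ {Q : ℕ → ℕ → ℕ} {i s t : ℕ} (hs : 1 ≤ s) (ht : 1 ≤ t)
    (h : i < Q (s + 1) (t + 1)) : 1 ≤ fQ Q i := by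
  have hne : {k | ∃ s t : ℕ, 1 ≤ s ∧ 1 ≤ t ∧ i < Q (s + 1) (t + 1) ∧ k = s * t}.Nonempty :=
    ⟨s * t, s, t, hs, ht, h, rfl⟩
  obtain ⟨s', t', hs', ht', -, hk⟩ := Nat.sInf_mem hne
  rw [fQ, hk]
  exact Nat.one_le_iff_ne_zero.mpr (by positivity)

/-- Let 𝒢 be a hereditary family of digraphs and `Q` such that
for all `s,t ≥ 1`, every digraph in 𝒢 on at least `Q s t` vertices has a clique
of size ≥ `s` or an acyclic set of size ≥ `t`. Then every `G ∈ 𝒢` on `n`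
vertices satisfies `CC G ≤ (∑ i in [1..n], 1 / f_Q i) * MAIS G`. -/
theorem stmt2 (𝒢 : Set Digr) (h𝒢 : Digr.Hereditary 𝒢) (Q : ℕ → ℕ → ℕ)
    (hQ : ∀ s t : ℕ, 1 ≤ s → 1 ≤ t → ∀ G ∈ 𝒢, Q s t ≤ G.verts.card →
      (∃ C : Finset ℕ, G.IsClique C ∧ s ≤ C.card) ∨
      (∃ I : Finset ℕ, G.IsAcyclicSet I ∧ t ≤ I.card)) :
    ∀ G ∈ 𝒢, (G.cc : ℝ) ≤
      (∑ i ∈ Finset.Icc 1 G.verts.card, 1 / (fQ Q i : ℝ)) * (G.mais : ℝ) := by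
  suffices H : ∀ n, ∀ G ∈ 𝒢, G.verts.card ≤ n → (G.cc : ℝ) ≤
      (∑ i ∈ Finset.Icc 1 G.verts.card, 1 / (fQ Q i : ℝ)) * (G.mais : ℝ) by
    intro G hG; exact H G.verts.card G hG le_rfl
  intro n
  induction n with
  | zero =>
    intro G hG hcard
    have h0 : G.verts = ∅ := Finset.card_eq_zero.mp (Nat.le_zero.mp hcard)
    rw [Digr.cc_eq_zero G h0, h0]
    simp
  | succ n ih =>
    intro G hG hcard
    rcases Finset.eq_empty_or_nonempty G.verts with h0 | hne
    · rw [Digr.cc_eq_zero G h0, h0]; simp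
    set c := G.verts.card with hc
    set ω := G.cliqueNum with hωdef
    set α := G.mais with hαdef
    have hω1 : 1 ≤ ω := Digr.one_le_cliqueNum G hne
    have hα1 : 1 ≤ α := Digr.one_le_mais G hne
    have hlt : c < Q (ω + 1) (α + 1) := card_lt_Q Q hQ G hG
    obtain ⟨C, hC, hCcard⟩ := Digr.exists_max_clique G
    set G' := G.induce (G.verts \ C) with hG'def
    have hG' : G' ∈ 𝒢 := h𝒢 G hG _ Finset.sdiff_subset
    have hverts' : G'.verts = G.verts \ C := by
      simp [hG'def, Digr.induce, Finset.inter_eq_left.mpr Finset.sdiff_subset]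
    have hcard' : G'.verts.card = c - ω := by
      rw [hverts', Finset.card_sdiff_of_subset hC.1, hCcard]
    have hωc : ω ≤ c := by
      have := Finset.card_le_card hC.1
      omega
    have hle : G'.verts.card ≤ n := by omega
    have IH := ih G' hG' hle
    have hm' : (G'.mais : ℝ) ≤ (α : ℝ) := Nat.cast_le.mpr (Digr.mais_induce_le G _)
    have hsumnn : ∀ (m : ℕ), 0 ≤ ∑ i ∈ Finset.Icc 1 m, 1 / (fQ Q i : ℝ) :=
      fun m => Finset.sum_nonneg fun i _ => by positivity
    have IH2 : (G'.cc : ℝ) ≤ (∑ i ∈ Finset.Icc 1 (c - ω), 1 / (fQ Q i : ℝ)) * (α : ℝ) := by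
      rw [hcard'] at IH
      exact IH.trans (mul_le_mul_of_nonneg_left hm' (hsumnn _))
    have hαpos : (0:ℝ) < α := by exact_mod_cast hα1
    have hωpos : (0:ℝ) < ω := by exact_mod_cast hω1
    have hterm : ∀ i ∈ Finset.Ioc (c - ω) c, 1 / ((ω:ℝ) * α) ≤ 1 / (fQ Q i : ℝ) := by
      intro i hi
      have hi' : i ≤ c := (Finset.mem_Ioc.mp hi).2
      have h1 : fQ Q i ≤ ω * α := fQ_le hi' hω1 hα1 hlt
      have h2 : 1 ≤ fQ Q i := one_le_fQ hω1 hα1 (lt_of_le_of_lt hi' hlt)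
      have hpos : (0:ℝ) < (fQ Q i : ℝ) := by exact_mod_cast h2
      apply one_div_le_one_div_of_le hpos
      exact_mod_cast h1
    have hcardIoc : (Finset.Ioc (c - ω) c).card = ω := by
      rw [Nat.card_Ioc]; omega
    have htail : (ω : ℝ) * (1 / ((ω:ℝ) * α)) ≤ ∑ i ∈ Finset.Ioc (c - ω) c, 1 / (fQ Q i : ℝ) := by
      calc (ω:ℝ) * (1 / ((ω:ℝ)*α)) = (Finset.Ioc (c-ω) c).card • (1 / ((ω:ℝ)*α)) := by
            rw [hcardIoc]; simp [nsmul_eq_mul]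
        _ ≤ _ := Finset.card_nsmul_le_sum _ _ _ hterm
    have hone : 1 ≤ (∑ i ∈ Finset.Ioc (c - ω) c, 1 / (fQ Q i : ℝ)) * α := by
      have hkey : (ω:ℝ) * (1 / ((ω:ℝ)*α)) * α = 1 := by field_simp
      calc (1:ℝ) = (ω:ℝ) * (1 / ((ω:ℝ)*α)) * α := hkey.symm
        _ ≤ _ := mul_le_mul_of_nonneg_right htail hαpos.le
    have hsplit : (∑ i ∈ Finset.Icc 1 (c - ω), 1 / (fQ Q i : ℝ))
        + (∑ i ∈ Finset.Ioc (c - ω) c, 1 / (fQ Q i : ℝ))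
        = ∑ i ∈ Finset.Icc 1 c, 1 / (fQ Q i : ℝ) := by
      rw [show (1:ℕ) = 0 + 1 from rfl, Finset.Icc_add_one_left_eq_Ioc, Finset.Icc_add_one_left_eq_Ioc]
      exact Finset.sum_Ioc_consecutive _ (Nat.zero_le _) (by omega)
    have hcc : (G.cc : ℝ) ≤ (G'.cc : ℝ) + 1 := by
      exact_mod_cast Digr.cc_le_succ G hC
    calc (G.cc : ℝ) ≤ (G'.cc : ℝ) + 1 := hcc
      _ ≤ (∑ i ∈ Finset.Icc 1 (c-ω), 1/(fQ Q i : ℝ)) * α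
          + (∑ i ∈ Finset.Ioc (c-ω) c, 1/(fQ Q i : ℝ)) * α := add_le_add IH2 hone
      _ = (∑ i ∈ Finset.Icc 1 c, 1/(fQ Q i : ℝ)) * α := by rw [← hsplit, add_mul]
end

section
/- Let 𝒢 be a hereditary family of finite simple graphs and let c > 0 be a constant such that for all integers s,t ≥ 1, every graph in 𝒢 on at least c·s·t vertices has a clique of size at least s or an independent set of size at least t. Then there exists a constant C > 0 such that every graph G ∈ 𝒢 on n ≥ 2 vertices satisfies χ̄(G) ≤ C · (log n) · α(G). -/
/-- A finite simple graph: a finite vertex set (a finset of naturals) together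
with a symmetric irreflexive adjacency relation. -/
structure FGraph where
  verts : Finset ℕ
  Adj : ℕ → ℕ → Prop
  symm : ∀ u v, Adj u v → Adj v u
  loopless : ∀ v, ¬ Adj v v

namespace FGraph

/-- A clique: a set of pairwise adjacent vertices. -/
def IsClique (G : FGraph) (C : Finset ℕ) : Prop :=
  C ⊆ G.verts ∧ ∀ u ∈ C, ∀ v ∈ C, u ≠ v → G.Adj u v

/-- An independent set: a set of pairwise non-adjacent vertices. -/
def IsIndep (G : FGraph) (I : Finset ℕ) : Prop :=
  I ⊆ G.verts ∧ ∀ u ∈ I, ∀ v ∈ I, u ≠ v → ¬ G.Adj u v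

/-- α: the independence number. -/
noncomputable def indepNum (G : FGraph) : ℕ :=
  sSup {k | ∃ I, G.IsIndep I ∧ I.card = k}

/-- χ̄: the clique cover number, i.e. the minimum number of cliques whose union
is the vertex set. -/
noncomputable def ccNum (G : FGraph) : ℕ :=
  sInf {k | ∃ 𝒞 : Finset (Finset ℕ), 𝒞.card = k ∧ (∀ C ∈ 𝒞, G.IsClique C) ∧
    ∀ v ∈ G.verts, ∃ C ∈ 𝒞, v ∈ C}

/-- The subgraph induced by a set of vertices. -/
def induce (G : FGraph) (S : Finset ℕ) : FGraph where
  verts := S ∩ G.verts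
  Adj := fun a b => a ∈ S ∧ b ∈ S ∧ G.Adj a b
  symm := fun u v h => ⟨h.2.1, h.1, G.symm u v h.2.2⟩
  loopless := fun v h => G.loopless v h.2.2

/-- A family of graphs is hereditary if it is closed under taking induced
subgraphs. -/
def Hereditary (𝒢 : Set FGraph) : Prop :=
  ∀ G ∈ 𝒢, ∀ S ⊆ G.verts, G.induce S ∈ 𝒢

end FGraph

namespace FGraph

lemma indep_card_le (G : FGraph) {I : Finset ℕ} (hI : G.IsIndep I) :
    I.card ≤ G.indepNum := by
  apply le_csSup
  · exact ⟨G.verts.card, fun k ⟨J, hJ, hk⟩ => hk ▸ Finset.card_le_card hJ.1⟩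
  · exact ⟨I, hI, rfl⟩

lemma one_le_indepNum (G : FGraph) (h : G.verts.Nonempty) : 1 ≤ G.indepNum := by
  obtain ⟨v, hv⟩ := h
  have hind : G.IsIndep {v} := by
    refine ⟨by simpa using hv, ?_⟩
    intro u hu w hw huw
    simp only [Finset.mem_singleton] at hu hw
    exact absurd (hu.trans hw.symm) huw
  simpa using G.indep_card_le hind

lemma singleton_cover (G : FGraph) :
    ∃ 𝒞 : Finset (Finset ℕ), 𝒞.card ≤ G.verts.card ∧ (∀ C ∈ 𝒞, G.IsClique C) ∧
      ∀ v ∈ G.verts, ∃ C ∈ 𝒞, v ∈ C := by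
  refine ⟨G.verts.image (fun v => {v}), Finset.card_image_le, ?_, ?_⟩
  · intro C hC
    simp only [Finset.mem_image] at hC
    obtain ⟨v, hv, rfl⟩ := hC
    refine ⟨by simpa using hv, ?_⟩
    intro u hu w hw huw
    simp only [Finset.mem_singleton] at hu hw
    exact absurd (hu.trans hw.symm) huw
  · intro v hv
    exact ⟨{v}, Finset.mem_image_of_mem _ hv, Finset.mem_singleton_self v⟩

lemma ccSet_nonempty (G : FGraph) :
    {k | ∃ 𝒞 : Finset (Finset ℕ), 𝒞.card = k ∧ (∀ C ∈ 𝒞, G.IsClique C) ∧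
      ∀ v ∈ G.verts, ∃ C ∈ 𝒞, v ∈ C}.Nonempty := by
  obtain ⟨𝒞, _, h1, h2⟩ := G.singleton_cover
  exact ⟨𝒞.card, 𝒞, rfl, h1, h2⟩

lemma ccNum_le (G : FGraph) {𝒞 : Finset (Finset ℕ)} (h1 : ∀ C ∈ 𝒞, G.IsClique C)
    (h2 : ∀ v ∈ G.verts, ∃ C ∈ 𝒞, v ∈ C) : G.ccNum ≤ 𝒞.card :=
  Nat.sInf_le ⟨𝒞, rfl, h1, h2⟩

lemma ccNum_le_card (G : FGraph) : G.ccNum ≤ G.verts.card := by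
  obtain ⟨𝒞, hc, h1, h2⟩ := G.singleton_cover
  exact (G.ccNum_le h1 h2).trans hc

lemma clique_of_induce (G : FGraph) (S : Finset ℕ) {C : Finset ℕ}
    (h : (G.induce S).IsClique C) : G.IsClique C := by
  refine ⟨h.1.trans (Finset.inter_subset_right), ?_⟩
  intro u hu v hv huv
  exact (h.2 u hu v hv huv).2.2

lemma indep_of_induce (G : FGraph) (S : Finset ℕ) {I : Finset ℕ}
    (h : (G.induce S).IsIndep I) : G.IsIndep I := by
  refine ⟨h.1.trans (Finset.inter_subset_right), ?_⟩
  intro u hu v hv huv hadj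
  have hu' := h.1 hu
  have hv' := h.1 hv
  simp only [induce, Finset.mem_inter] at hu' hv'
  exact h.2 u hu v hv huv ⟨hu'.1, hv'.1, hadj⟩

lemma indepNum_induce_le (G : FGraph) (S : Finset ℕ) :
    (G.induce S).indepNum ≤ G.indepNum := by
  apply csSup_le
  · exact ⟨0, ∅, ⟨by simp [IsIndep], by simp⟩, rfl⟩
  · rintro k ⟨I, hI, rfl⟩
    exact G.indep_card_le (G.indep_of_induce S hI)

lemma ccNum_peel (G : FGraph) {K : Finset ℕ} (hK : G.IsClique K) :
    G.ccNum ≤ 1 + (G.induce (G.verts \ K)).ccNum := by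
  set G' := G.induce (G.verts \ K) with hG'
  obtain ⟨𝒞', hcard, h1, h2⟩ := Nat.sInf_mem G'.ccSet_nonempty
  have hcov : ∀ v ∈ G.verts, ∃ C ∈ insert K 𝒞', v ∈ C := by
    intro v hv
    by_cases hvK : v ∈ K
    · exact ⟨K, Finset.mem_insert_self _ _, hvK⟩
    · have hv' : v ∈ G'.verts := by
        simp only [hG', induce, Finset.mem_inter, Finset.mem_sdiff]
        exact ⟨⟨hv, hvK⟩, hv⟩
      obtain ⟨C, hC, hvC⟩ := h2 v hv'
      exact ⟨C, Finset.mem_insert_of_mem hC, hvC⟩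
  have hcl : ∀ C ∈ insert K 𝒞', G.IsClique C := by
    intro C hC
    rcases Finset.mem_insert.mp hC with rfl | hC
    · exact hK
    · exact G.clique_of_induce _ (h1 C hC)
  calc G.ccNum ≤ (insert K 𝒞').card := G.ccNum_le hcl hcov
    _ ≤ 𝒞'.card + 1 := Finset.card_insert_le _ _
    _ = 1 + G'.ccNum := by
        have hcc : G'.ccNum = 𝒞'.card := hcard.symm
        omega

end FGraph

set_option maxHeartbeats 1000000 in
lemma stmt10_main (𝒢 : Set FGraph) (h𝒢 : FGraph.Hereditary 𝒢) (c : ℝ) (hc : 1 ≤ c)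
    (hRamsey : ∀ s t : ℕ, 1 ≤ s → 1 ≤ t → ∀ G ∈ 𝒢,
      c * (s : ℝ) * (t : ℝ) ≤ (G.verts.card : ℝ) →
      (∃ C : Finset ℕ, G.IsClique C ∧ s ≤ C.card) ∨
      (∃ I : Finset ℕ, G.IsIndep I ∧ t ≤ I.card)) :
    ∀ n : ℕ, ∀ G ∈ 𝒢, G.verts.card = n → 1 ≤ n →
      (G.ccNum : ℝ) ≤ 4 * c * (G.indepNum : ℝ) * (Real.log n + 1) := by
  intro n
  induction n using Nat.strong_induction_on with
  | _ n ih =>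
  intro G hG hn hn1
  have ha1 : 1 ≤ G.indepNum :=
    G.one_le_indepNum (Finset.card_pos.mp (by omega))
  set a := G.indepNum with ha
  have hapos : (1:ℝ) ≤ (a:ℝ) := by exact_mod_cast ha1
  have hlogn : 0 ≤ Real.log n := Real.log_nonneg (by exact_mod_cast hn1)
  by_cases hsmall : (n:ℝ) < 2*c*a
  · have h1 : (G.ccNum : ℝ) ≤ n := by exact_mod_cast hn ▸ G.ccNum_le_card
    nlinarith
  · push_neg at hsmall
    set x : ℝ := n/(2*c*a) with hx
    have hden : (0:ℝ) < 2*c*a := by nlinarith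
    have hx1 : 1 ≤ x := (one_le_div hden).mpr hsmall
    set s := ⌊x⌋₊ with hs
    have hs1 : 1 ≤ s := Nat.le_floor (by exact_mod_cast hx1)
    have hsx : (s:ℝ) ≤ x := Nat.floor_le (by linarith)
    have hxs : x < s + 1 := Nat.lt_floor_add_one x
    have hs2 : x ≤ 2*s := by
      have : (1:ℝ) ≤ s := by exact_mod_cast hs1
      linarith
    have hprem : c * (s:ℝ) * ((a+1 : ℕ):ℝ) ≤ (G.verts.card : ℝ) := by
      have h1 : c * s * (a+1) ≤ c * x * (a+1) := by
        have : (0:ℝ) ≤ a + 1 := by linarith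
        nlinarith
      have hxn : x * (2*c*a) = n := by
        rw [hx]; field_simp
      have h2 : c * x * ((a:ℝ)+1) ≤ n := by
        have hx0 : (0:ℝ) ≤ x := by linarith
        nlinarith [mul_nonneg (mul_nonneg (by linarith : (0:ℝ) ≤ c) hx0)
          (by linarith : (0:ℝ) ≤ (a:ℝ) - 1), hxn]
      push_cast
      rw [hn]
      push_cast at h1 ⊢
      linarith
    rcases hRamsey s (a+1) hs1 (by omega) G hG hprem with ⟨K, hK, hsK⟩ | ⟨I, hI, htI⟩
    · -- clique case
      set G' := G.induce (G.verts \ K) with hG'def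
      have hG' : G' ∈ 𝒢 := h𝒢 G hG _ (Finset.sdiff_subset)
      have hKsub : K ⊆ G.verts := hK.1
      have hm : G'.verts.card = n - K.card := by
        have : G'.verts = G.verts \ K := by
          simp only [hG'def, FGraph.induce]
          exact Finset.inter_eq_left.mpr Finset.sdiff_subset
        rw [this, Finset.card_sdiff_of_subset hKsub, hn]
      have hKn : K.card ≤ n := hn ▸ Finset.card_le_card hKsub
      have hpeel : (G.ccNum : ℝ) ≤ 1 + G'.ccNum := by
        exact_mod_cast G.ccNum_peel hK
      have ha' : (G'.indepNum : ℝ) ≤ a := by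
        exact_mod_cast G.indepNum_induce_le _
      have ha'0 : (0:ℝ) ≤ (G'.indepNum : ℝ) := by positivity
      by_cases hm0 : G'.verts.card = 0
      · have : (G'.ccNum : ℝ) ≤ 0 := by
          exact_mod_cast hm0 ▸ G'.ccNum_le_card
        nlinarith
      · have hm1 : 1 ≤ G'.verts.card := by omega
        have hmlt : G'.verts.card < n := by omega
        have hIH := ih _ hmlt G' hG' rfl hm1
        set m := G'.verts.card with hmdef
        have hmx : (m:ℝ) ≤ (n:ℝ) - s := by
          have : (m:ℝ) = (n:ℝ) - K.card := by
            rw [hm]; push_cast [Nat.cast_sub hKn]; ring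
          have hsK' : (s:ℝ) ≤ K.card := by exact_mod_cast hsK
          linarith
        have hy : (n:ℝ) - s ≤ (n:ℝ) * (1 - 1/(4*c*a)) := by
          have h4 : (0:ℝ) < 4*c*a := by nlinarith
          have : (n:ℝ)/(4*c*a) ≤ s := by
            rw [div_le_iff₀ h4]
            have hxn : x * (2*c*a) = n := by rw [hx]; field_simp
            nlinarith [hxn, hs2, hc, hapos]
          have hexp : (n:ℝ) * (1 - 1/(4*c*a)) = n - n/(4*c*a) := by ring
          linarith [hexp]
        have hmpos : (0:ℝ) < m := by exact_mod_cast hm1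
        have hlogm : Real.log m ≤ Real.log n - 1/(4*c*a) := by
          have h4 : (0:ℝ) < 4*c*a := by nlinarith
          have hfrac : 1/(4*c*a) < 1 := by
            rw [div_lt_one h4]; nlinarith
          have h1x : (0:ℝ) < 1 - 1/(4*c*a) := by linarith
          have hnpos : (0:ℝ) < n := by
            have : (1:ℕ) ≤ n := hn1
            exact_mod_cast Nat.lt_of_lt_of_le Nat.zero_lt_one this
          have hlm : Real.log m ≤ Real.log ((n:ℝ) * (1 - 1/(4*c*a))) :=
            Real.log_le_log hmpos (le_trans hmx hy)
          rw [Real.log_mul (ne_of_gt hnpos) (ne_of_gt h1x)] at hlm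
          have := Real.log_le_sub_one_of_pos h1x
          linarith
        have hkey : (G'.ccNum : ℝ) ≤ 4*c*a*(Real.log m + 1) := by
          have hlogm0 : 0 ≤ Real.log m + 1 := by
            have := Real.log_nonneg (by exact_mod_cast hm1 : (1:ℝ) ≤ (m:ℝ))
            linarith
          calc (G'.ccNum : ℝ) ≤ 4*c*(G'.indepNum : ℝ)*(Real.log m + 1) := hIH
            _ ≤ 4*c*a*(Real.log m + 1) := by
                apply mul_le_mul_of_nonneg_right _ hlogm0
                nlinarith
        have hfin : 4*c*a*(1/(4*c*a)) = 1 := by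
          field_simp
        nlinarith [hkey, hlogm, hpeel]
    · -- independent set case: contradiction
      have := G.indep_card_le hI
      omega

/-- Let 𝒢 be a hereditary family of graphs and `c > 0` such
that for all `s,t ≥ 1`, every graph in 𝒢 on at least `c·s·t` vertices has a
clique of size ≥ `s` or an independent set of size ≥ `t`. Then there is a
constant `C > 0` such that every `G ∈ 𝒢` on `n ≥ 2` vertices satisfies
`χ̄(G) ≤ C · (log n) · α(G)`. -/
theorem stmt10 (𝒢 : Set FGraph) (h𝒢 : FGraph.Hereditary 𝒢) (c : ℝ) (hc : 0 < c)
    (hRamsey : ∀ s t : ℕ, 1 ≤ s → 1 ≤ t → ∀ G ∈ 𝒢,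
      c * (s : ℝ) * (t : ℝ) ≤ (G.verts.card : ℝ) →
      (∃ C : Finset ℕ, G.IsClique C ∧ s ≤ C.card) ∨
      (∃ I : Finset ℕ, G.IsIndep I ∧ t ≤ I.card)) :
    ∃ C : ℝ, 0 < C ∧ ∀ G ∈ 𝒢, 2 ≤ G.verts.card →
      (G.ccNum : ℝ) ≤ C * Real.log (G.verts.card : ℝ) * (G.indepNum : ℝ) := by
  set c' : ℝ := max c 1 with hc'
  have hc'1 : 1 ≤ c' := le_max_right _ _
  have hc'c : c ≤ c' := le_max_left _ _
  have hRamsey' : ∀ s t : ℕ, 1 ≤ s → 1 ≤ t → ∀ G ∈ 𝒢,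
      c' * (s : ℝ) * (t : ℝ) ≤ (G.verts.card : ℝ) →
      (∃ C : Finset ℕ, G.IsClique C ∧ s ≤ C.card) ∨
      (∃ I : Finset ℕ, G.IsIndep I ∧ t ≤ I.card) := by
    intro s t hs ht G hG hle
    apply hRamsey s t hs ht G hG
    have hs0 : (0:ℝ) ≤ (s:ℝ) := by positivity
    have ht0 : (0:ℝ) ≤ (t:ℝ) := by positivity
    nlinarith
  have hmain := stmt10_main 𝒢 h𝒢 c' hc'1 hRamsey'
  have hlog2 : 0 < Real.log 2 := Real.log_pos (by norm_num)
  refine ⟨4 * c' * (1 + 1/Real.log 2), by positivity, ?_⟩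
  intro G hG hn2
  set n := G.verts.card with hn
  have h1n : 1 ≤ n := by omega
  have hb := hmain n G hG rfl h1n
  have hlogn2 : Real.log 2 ≤ Real.log n := by
    apply Real.log_le_log (by norm_num)
    exact_mod_cast hn2
  have hlogn : 0 < Real.log n := lt_of_lt_of_le hlog2 hlogn2
  have ha0 : (1:ℝ) ≤ (G.indepNum : ℝ) := by
    exact_mod_cast G.one_le_indepNum (Finset.card_pos.mp (by omega))
  have hstep : Real.log n + 1 ≤ (1 + 1/Real.log 2) * Real.log n := by
    have h1 : 1 ≤ Real.log n / Real.log 2 :=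
      (one_le_div hlog2).mpr hlogn2
    have heq : (1 + 1/Real.log 2) * Real.log n = Real.log n + Real.log n / Real.log 2 := by
      ring
    rw [heq]
    linarith
  have hc'0 : (0:ℝ) < c' := by linarith
  calc (G.ccNum : ℝ) ≤ 4 * c' * (G.indepNum : ℝ) * (Real.log n + 1) := hb
    _ ≤ 4 * c' * (G.indepNum : ℝ) * ((1 + 1/Real.log 2) * Real.log n) := by
        apply mul_le_mul_of_nonneg_left hstep
        positivity
    _ = 4 * c' * (1 + 1/Real.log 2) * Real.log n * (G.indepNum : ℝ) := by ring
end
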